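/- arXiv:2305.09634 — 2 statements merged into one kernel-verified Lean document; each statement's English description precedes it below -/
import Mathlib

section
/- For every state s ∈ S and every action a legal at s, Val(s) ≥ ∑_{s'} (P s a)(s')·Val(s'). -/
open scoped ENNReal NNReal Classical
open Filter

universe u v

variable {S : Type u} {A : Type v}

/-- A finite MDP: `P s a = some d` means action `a` is legal at `s` and `d` is a
probability distribution on `S`; every state has at least one legal action. -/
structure MDP (S : Type u) (A : Type v) [Fintype S] [Fintype A] where
  P : S → A → Option (S → NNReal)
  sum_one : ∀ s a d, P s a = some d → (∑ s', d s') = 1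
  exists_legal : ∀ s, ∃ a, (P s a).isSome

/-- Last state of an alternating path starting at `s` with steps `steps`. -/
def lastState : S → List (A × S) → S
  | s, [] => s
  | _, (_, s') :: rest => lastState s' rest

/-- A finite path: a start state together with a list of (action, next-state) steps. -/
structure FPath (S : Type u) (A : Type v) where
  start : S
  steps : List (A × S)

namespace FPath

def last (ρ : FPath S A) : S := lastState ρ.start ρ.steps

def states (ρ : FPath S A) : List S := ρ.start :: ρ.steps.map Prod.snd

def length (ρ : FPath S A) : ℕ := ρ.steps.length

end FPath

/-- A (raw) strategy: maps each finite path (start state + steps) to a distribution on actions. -/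
def Strat (S : Type u) (A : Type v) := S → List (A × S) → A → ℝ≥0∞

/-- Shifted strategy `σ_ρ` for `ρ = (s₀, pre)`: `σ_ρ(ρ') = σ(ρ·ρ')`. -/
def shiftStrat (σ : Strat S A) (s₀ : S) (pre : List (A × S)) : Strat S A :=
  fun _ steps a => σ s₀ (pre ++ steps) a

/-- Generic cylinder weight (product of strategy- and transition-probabilities along the
steps), relative to a transition kernel `p`. The accumulator `pre` is the path-prefix so far. -/
noncomputable def wtP (p : S → A → S → ℝ≥0∞) (σ : Strat S A) (s₀ : S) :
    List (A × S) → List (A × S) → ℝ≥0∞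
  | _, [] => 1
  | pre, (a, s') :: rest =>
      σ s₀ pre a * p (lastState s₀ pre) a s' * wtP p σ s₀ (pre ++ [(a, s')]) rest
  termination_by pre l => l.length

/-- Generic cylinder probability of path `ρ` from start state `s`, kernel `p`. -/
noncomputable def cylProbP (p : S → A → S → ℝ≥0∞) (σ : Strat S A) (s : S) (ρ : FPath S A) :
    ℝ≥0∞ :=
  if ρ.start = s then wtP p σ ρ.start [] ρ.steps else 0

namespace MDP

variable [Fintype S] [Fintype A]

def legal (M : MDP S A) (s : S) (a : A) : Prop := (M.P s a).isSome

noncomputable def prob (M : MDP S A) (s : S) (a : A) (s' : S) : ℝ≥0∞ :=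
  (M.P s a).elim 0 fun d => (d s' : ℝ≥0∞)

/-- `ρ` is a finite path of `M` from `s`: every action legal, every transition of
positive probability. -/
def IsPathFrom (M : MDP S A) : S → List (A × S) → Prop
  | _, [] => True
  | s, (a, s') :: rest => M.legal s a ∧ 0 < M.prob s a s' ∧ M.IsPathFrom s' rest

def IsPath (M : MDP S A) (ρ : FPath S A) : Prop := M.IsPathFrom ρ.start ρ.steps

/-- `σ` is a strategy: at every finite path it gives a probability distribution on actions
supported on actions legal at the last state. -/
def IsStrategy (M : MDP S A) (σ : Strat S A) : Prop :=
  ∀ s steps, M.IsPathFrom s steps →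
    (∑ a, σ s steps a) = 1 ∧ ∀ a, 0 < σ s steps a → M.legal (lastState s steps) a

/-- Cylinder probability `P_{σ,s}(ρ)` in `M`. -/
noncomputable def cylProb (M : MDP S A) (σ : Strat S A) (s : S) (ρ : FPath S A) : ℝ≥0∞ :=
  cylProbP M.prob σ s ρ

/-- `T` is a set of sink states: each `t ∈ T` has exactly one legal action, leading back
to `t` with probability `1`. -/
def SinkSet (M : MDP S A) (T : Set S) : Prop :=
  ∀ t ∈ T, (∃! a, M.legal t a) ∧ ∀ a, M.legal t a → M.prob t a t = 1

/-- Generic pruned finite-path predicate: all states have positive value `v` and every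
step uses an `opt` state-action pair with positive transition probability in `M`. -/
def IsPathFromPruned (M : MDP S A) (v : S → ℝ≥0∞) (opt : S → A → Prop) :
    S → List (A × S) → Prop
  | s, [] => 0 < v s
  | s, (a, s') :: rest =>
      0 < v s ∧ opt s a ∧ 0 < M.prob s a s' ∧ M.IsPathFromPruned v opt s' rest

/-! ### Reachability -/

/-- `ρ` is a `T`-hitting path: its last state lies in `T` and no other state does. -/
def HitsFirst (T : Set S) (ρ : FPath S A) : Prop :=
  ρ.last ∈ T ∧ ∀ x ∈ ρ.states.dropLast, x ∉ T

/-- `Pr_{σ,s}(◊T)`: sum over `T`-hitting paths starting at `s` of their cylinder probabilities. -/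
noncomputable def prReach (M : MDP S A) (σ : Strat S A) (s : S) (T : Set S) : ℝ≥0∞ :=
  ∑' ρ : {ρ : FPath S A // M.IsPath ρ ∧ HitsFirst T ρ ∧ ρ.start = s}, M.cylProb σ s ρ.1

/-- `Val(s)` for reachability: supremum over strategies of `Pr_{σ,s}(◊T)`. -/
noncomputable def reachVal (M : MDP S A) (T : Set S) (s : S) : ℝ≥0∞ :=
  ⨆ (σ : Strat S A) (_ : M.IsStrategy σ), M.prReach σ s T

/-- `(s,a) ∈ Opt` for reachability. -/
def OptR (M : MDP S A) (T : Set S) (s : S) (a : A) : Prop :=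
  M.legal s a ∧ M.reachVal T s = ∑ s', M.prob s a s' * M.reachVal T s'

/-- `σ ∈ Σ^Opt` for reachability. -/
def SigmaOptR (M : MDP S A) (T : Set S) (σ : Strat S A) : Prop :=
  ∀ s steps, M.IsPathFrom s steps → ∀ a, 0 < σ s steps a → M.OptR T (lastState s steps) a

/-- Transition probabilities of the pruned MDP `M'` for reachability. -/
noncomputable def probR' (M : MDP S A) (T : Set S) (s : S) (a : A) (s' : S) : ℝ≥0∞ :=
  if M.OptR T s a ∧ 0 < M.reachVal T s then
    M.prob s a s' * M.reachVal T s' / M.reachVal T s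
  else 0

/-- `ρ` is a finite path of the pruned MDP `M'` (reachability version). -/
def IsPathR' (M : MDP S A) (T : Set S) (ρ : FPath S A) : Prop :=
  M.IsPathFromPruned (M.reachVal T) (M.OptR T) ρ.start ρ.steps

/-- Cylinder probability `P'_{σ,s}(ρ)` in the pruned MDP `M'` (reachability version). -/
noncomputable def cylProbR' (M : MDP S A) (T : Set S) (σ : Strat S A) (s : S) (ρ : FPath S A) :
    ℝ≥0∞ :=
  cylProbP (M.probR' T) σ s ρ

/-- `Pr'_{σ,s}(◊T)` in the pruned MDP `M'`. -/
noncomputable def prReach' (M : MDP S A) (σ : Strat S A) (s : S) (T : Set S) : ℝ≥0∞ :=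
  ∑' ρ : {ρ : FPath S A // M.IsPathR' T ρ ∧ HitsFirst T ρ ∧ ρ.start = s},
    M.cylProbR' T σ s ρ.1

/-- Probability of hitting `T` for the first time in exactly `r` steps, in `M`. -/
noncomputable def hitLenProb (M : MDP S A) (σ : Strat S A) (s : S) (T : Set S) (r : ℕ) :
    ℝ≥0∞ :=
  ∑' ρ : {ρ : FPath S A // M.IsPath ρ ∧ HitsFirst T ρ ∧ ρ.start = s ∧ ρ.length = r},
    M.cylProb σ s ρ.1

/-- Probability of hitting `T` for the first time in exactly `r` steps, in `M'`. -/
noncomputable def hitLenProb' (M : MDP S A) (σ : Strat S A) (s : S) (T : Set S) (r : ℕ) :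
    ℝ≥0∞ :=
  ∑' ρ : {ρ : FPath S A // M.IsPathR' T ρ ∧ HitsFirst T ρ ∧ ρ.start = s ∧ ρ.length = r},
    M.cylProbR' T σ s ρ.1

/-- Conditional expected length to target `E_{σ,s}(len_T | ◊T)`. -/
noncomputable def condExpLen (M : MDP S A) (σ : Strat S A) (s : S) (T : Set S) : ℝ≥0∞ :=
  ∑' r : ℕ, (r : ℝ≥0∞) * M.hitLenProb σ s T r / M.prReach σ s T

/-- Expected length to target in `M'`, `E'_{σ,s}(len_T)`; `∞` unless `Pr'_{σ,s}(◊T) = 1`. -/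
noncomputable def expLen' (M : MDP S A) (σ : Strat S A) (s : S) (T : Set S) : ℝ≥0∞ :=
  if M.prReach' σ s T = 1 then ∑' r : ℕ, (r : ℝ≥0∞) * M.hitLenProb' σ s T r else ⊤

/-! ### Safety -/

/-- `Safe_n(σ,s)`: probability of the paths of length `n` from `s` avoiding `Bad`. -/
noncomputable def safeN (M : MDP S A) (σ : Strat S A) (s : S) (Bad : Set S) (n : ℕ) : ℝ≥0∞ :=
  ∑' ρ : {ρ : FPath S A //
      M.IsPath ρ ∧ ρ.start = s ∧ ρ.length = n ∧ ∀ x ∈ ρ.states, x ∉ Bad},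
    M.cylProb σ s ρ.1

/-- `Pr_{σ,s}(□¬Bad) := ⨅ n, Safe_n(σ,s)`. -/
noncomputable def prSafe (M : MDP S A) (σ : Strat S A) (s : S) (Bad : Set S) : ℝ≥0∞ :=
  ⨅ n : ℕ, M.safeN σ s Bad n

/-- `Val(s)` for safety: supremum over strategies of `Pr_{σ,s}(□¬Bad)`. -/
noncomputable def safeVal (M : MDP S A) (Bad : Set S) (s : S) : ℝ≥0∞ :=
  ⨆ (σ : Strat S A) (_ : M.IsStrategy σ), M.prSafe σ s Bad

/-- `(s,a) ∈ Opt` for safety. -/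
def OptS (M : MDP S A) (Bad : Set S) (s : S) (a : A) : Prop :=
  M.legal s a ∧ M.safeVal Bad s = ∑ s', M.prob s a s' * M.safeVal Bad s'

/-- `σ ∈ Σ^Opt` for safety. -/
def SigmaOptS (M : MDP S A) (Bad : Set S) (σ : Strat S A) : Prop :=
  ∀ s steps, M.IsPathFrom s steps → ∀ a, 0 < σ s steps a → M.OptS Bad (lastState s steps) a

/-- `UPreⁱ(Bad)`. -/
def UPre (M : MDP S A) (Bad : Set S) : ℕ → Set S
  | 0 => Bad
  | i + 1 => {s | ∀ a, M.legal s a → ∃ s' ∈ M.UPre Bad i, 0 < M.prob s a s'}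

/-- `Good := S \ UPre*(Bad)`. -/
def GoodSet (M : MDP S A) (Bad : Set S) : Set S := (⋃ i, M.UPre Bad i)ᶜ

/-- `V := S \ (Good ∪ Bad)`. -/
def VSet (M : MDP S A) (Bad : Set S) : Set S := (M.GoodSet Bad ∪ Bad)ᶜ

/-- `Pr_{σ,s}(GoodCyl(ρ)) := P_{σ,s}(ρ) · Pr_{σ_ρ, last(ρ)}(□¬Bad)`. -/
noncomputable def goodCyl (M : MDP S A) (σ : Strat S A) (s : S) (Bad : Set S) (ρ : FPath S A) :
    ℝ≥0∞ :=
  M.cylProb σ s ρ * M.prSafe (shiftStrat σ ρ.start ρ.steps) ρ.last Bad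

/-- Transition probabilities of the pruned MDP `M'` for safety. -/
noncomputable def probS' (M : MDP S A) (Bad : Set S) (s : S) (a : A) (s' : S) : ℝ≥0∞ :=
  if M.OptS Bad s a ∧ 0 < M.safeVal Bad s then
    M.prob s a s' * M.safeVal Bad s' / M.safeVal Bad s
  else 0

/-- `ρ` is a finite path of the pruned MDP `M'` (safety version). -/
def IsPathS' (M : MDP S A) (Bad : Set S) (ρ : FPath S A) : Prop :=
  M.IsPathFromPruned (M.safeVal Bad) (M.OptS Bad) ρ.start ρ.steps

/-- Cylinder probability `P'_{σ,s}(ρ)` in the pruned MDP `M'` (safety version). -/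
noncomputable def cylProbS' (M : MDP S A) (Bad : Set S) (σ : Strat S A) (s : S)
    (ρ : FPath S A) : ℝ≥0∞ :=
  cylProbP (M.probS' Bad) σ s ρ

end MDP

/-- `Reward_n(ρ) = ∑_{i<n} R(sᵢ, aᵢ)` for `ρ` starting at `s` with steps `steps`. -/
def rewardOf (R : S → A → ℝ) : S → List (A × S) → ℝ
  | _, [] => 0
  | s, (a, s') :: rest => R s a + rewardOf R s' rest

namespace MDP

variable [Fintype S] [Fintype A]

/-- `E'_{σ,s}(Reward_n)` in the pruned MDP `M'` (safety version). -/
noncomputable def expRewN' (M : MDP S A) (Bad : Set S) (R : S → A → ℝ) (σ : Strat S A)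
    (s : S) (n : ℕ) : ℝ :=
  ∑' ρ : {ρ : FPath S A // M.IsPathS' Bad ρ ∧ ρ.start = s ∧ ρ.length = n},
    (M.cylProbS' Bad σ s ρ.1).toReal * rewardOf R ρ.1.start ρ.1.steps

/-- `E'_{σ,s}(MP) := liminf_n (1/n)·E'_{σ,s}(Reward_n)`. -/
noncomputable def mp' (M : MDP S A) (Bad : Set S) (R : S → A → ℝ) (σ : Strat S A) (s : S) :
    ℝ :=
  Filter.atTop.liminf fun n : ℕ => M.expRewN' Bad R σ s n / n

/-- `E_{σ,s}(Reward_n | □¬Bad)`. -/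
noncomputable def condExpRewN (M : MDP S A) (Bad : Set S) (R : S → A → ℝ) (σ : Strat S A)
    (s : S) (n : ℕ) : ℝ :=
  (∑' ρ : {ρ : FPath S A // M.IsPath ρ ∧ ρ.start = s ∧ ρ.length = n},
    (M.goodCyl σ s Bad ρ.1).toReal * rewardOf R ρ.1.start ρ.1.steps) /
  (M.prSafe σ s Bad).toReal

/-- `E_{σ,s}(MP | □¬Bad) := liminf_n (1/n)·E_{σ,s}(Reward_n | □¬Bad)`. -/
noncomputable def condMP (M : MDP S A) (Bad : Set S) (R : S → A → ℝ) (σ : Strat S A)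
    (s : S) : ℝ :=
  Filter.atTop.liminf fun n : ℕ => M.condExpRewN Bad R σ s n / n

end MDP

/-!
If `s ∈ T`, the distribution `P s a` is the Dirac mass at `s` and there is nothing to prove.
Otherwise fix one strategy `τ x` for every successor `x` and let `σ` play `a` at `s` and then
follow `τ x`. Prefixing `s a` maps the `T`-hitting paths from `x` injectively to `T`-hitting
paths from `s`, multiplying their cylinder probabilities by `P s a x`; hence
`∑ₓ P s a x · Pr_{τ x, x}(◊T) ≤ Pr_{σ, s}(◊T) ≤ Val(s)`. Over a finite index set the sum of
suprema is the supremum over such families `τ`, which gives the claim.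
-/

theorem ENNReal.finsetSum_iSup_eq_iSup_pi {ι J : Type*} (t : Finset ι) (f : ι → J → ℝ≥0∞) :
    ∑ i ∈ t, ⨆ j, f i j = ⨆ g : ι → J, ∑ i ∈ t, f i (g i) := by
  rw [← ENNReal.finsetSum_iSup]
  · refine Finset.sum_congr rfl fun i _ => le_antisymm ?_ ?_
    · exact iSup_le fun j => le_iSup_of_le (fun _ => j) le_rfl
    · exact iSup_le fun g => le_iSup _ (g i)
  · intro g g'
    refine ⟨fun i => if f i (g i) ≤ f i (g' i) then g' i else g i, fun i => ?_⟩
    dsimp only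
    split_ifs with h
    · exact ⟨h, le_rfl⟩
    · exact ⟨le_rfl, (not_le.mp h).le⟩

lemma wtP_cons_eq_of_shift (p : S → A → S → ℝ≥0∞) {σ σ' : Strat S A} {s₀ s₁ : S} {a : A}
    (h : ∀ pre, σ s₀ ((a, s₁) :: pre) = σ' s₁ pre) (rest pre : List (A × S)) :
    wtP p σ s₀ ((a, s₁) :: pre) rest = wtP p σ' s₁ pre rest := by
  induction rest generalizing pre with
  | nil => simp [wtP]
  | cons step rest ih =>
      rw [wtP, wtP, h, List.cons_append, ih]
      rfl

/-- Play `a` at `s`, then from the first successor `t` on follow `τ t`, re-rooted at `t`.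
The branch for start states other than `s` only serves to make this a strategy. -/
noncomputable def stepThenStrat (s : S) (a : A) (τ : S → Strat S A) : Strat S A
  | s₀, [], b => if s₀ = s then if b = a then 1 else 0 else τ s₀ s₀ [] b
  | _, (_, t) :: rest, b => τ t t rest b

namespace MDP

lemma HitsFirst.cons {T : Set S} {s x : S} {a : A} {l : List (A × S)} (hs : s ∉ T)
    (h : HitsFirst T ⟨x, l⟩) : HitsFirst T ⟨s, (a, x) :: l⟩ := by
  refine ⟨h.1, fun y hy => ?_⟩
  simp only [FPath.states, List.map_cons, List.dropLast_cons_cons, List.mem_cons] at hy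
  rcases hy with rfl | hy
  · exact hs
  · exact h.2 y (by simpa [FPath.states] using hy)

variable [Fintype S] [Fintype A]

lemma sum_prob (M : MDP S A) {s : S} {a : A} (ha : M.legal s a) : ∑ s', M.prob s a s' = 1 := by
  obtain ⟨d, hd⟩ := Option.isSome_iff_exists.mp ha
  simp only [prob, hd, Option.elim_some]
  exact_mod_cast M.sum_one s a d hd

lemma sum_prob_mul_of_prob_eq_one (M : MDP S A) {s t : S} {a : A} (ha : M.legal s a)
    (ht : M.prob s a t = 1) (v : S → ℝ≥0∞) : ∑ s', M.prob s a s' * v s' = v t := by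
  have hrest : ∑ s' ∈ Finset.univ.erase t, M.prob s a s' = 0 := by
    have := Finset.add_sum_erase Finset.univ (M.prob s a) (Finset.mem_univ t)
    rw [M.sum_prob ha, ht, ← add_zero 1, add_assoc, zero_add] at this
    exact (ENNReal.add_right_inj ENNReal.one_ne_top).1 this
  rw [Finset.sum_eq_single t, ht, one_mul]
  · intro s' _ hne
    rw [Finset.sum_eq_zero_iff.1 hrest s' (Finset.mem_erase.2 ⟨hne, Finset.mem_univ _⟩), zero_mul]
  · exact fun h => absurd (Finset.mem_univ t) h

lemma stepThenStrat_isStrategy (M : MDP S A) {s : S} {a : A} (ha : M.legal s a)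
    {τ : S → Strat S A} (hτ : ∀ x, M.IsStrategy (τ x)) :
    M.IsStrategy (stepThenStrat s a τ) := by
  rintro s₀ (_ | ⟨⟨b, t⟩, rest⟩) hpath
  · by_cases hs : s₀ = s
    · subst hs
      refine ⟨by simp [stepThenStrat], fun b hb => ?_⟩
      by_cases hba : b = a
      · exact hba ▸ ha
      · simp [stepThenStrat, hba] at hb
    · simpa [stepThenStrat, hs] using hτ s₀ s₀ [] trivial
  · exact hτ t t rest hpath.2.2

lemma cylProb_stepThenStrat_cons (M : MDP S A) (s : S) (a : A) (τ : S → Strat S A) (x : S)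
    (l : List (A × S)) :
    M.cylProb (stepThenStrat s a τ) s ⟨s, (a, x) :: l⟩ =
      M.prob s a x * M.cylProb (τ x) x ⟨x, l⟩ := by
  simp only [cylProb, cylProbP, if_true]
  rw [wtP, List.nil_append, wtP_cons_eq_of_shift (σ' := τ x) M.prob (fun _ => rfl)]
  simp [stepThenStrat, lastState]

noncomputable def hitWeight (M : MDP S A) (σ : Strat S A) (x : S) (T : Set S)
    (l : List (A × S)) : ℝ≥0∞ :=
  if M.IsPath ⟨x, l⟩ ∧ HitsFirst T ⟨x, l⟩ then M.cylProb σ x ⟨x, l⟩ else 0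

lemma prReach_eq_tsum_hitWeight (M : MDP S A) (σ : Strat S A) (x : S) (T : Set S) :
    M.prReach σ x T = ∑' l : List (A × S), M.hitWeight σ x T l := by
  have hind : M.hitWeight σ x T = {l | M.IsPath ⟨x, l⟩ ∧ HitsFirst T ⟨x, l⟩}.indicator
      (fun l => M.cylProb σ x ⟨x, l⟩) := by
    ext l
    simp [hitWeight, Set.indicator_apply]
  rw [hind, ← tsum_subtype]
  let e : {l : List (A × S) // M.IsPath ⟨x, l⟩ ∧ HitsFirst T ⟨x, l⟩} ≃
      {ρ : FPath S A // M.IsPath ρ ∧ HitsFirst T ρ ∧ ρ.start = x} :=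
    { toFun := fun l => ⟨⟨x, l.1⟩, l.2.1, l.2.2, rfl⟩
      invFun := fun ρ => ⟨ρ.1.steps, by obtain ⟨⟨_, _⟩, h, h', rfl⟩ := ρ; exact ⟨h, h'⟩⟩
      left_inv := fun _ => rfl
      right_inv := fun ρ => by obtain ⟨⟨_, _⟩, _, _, rfl⟩ := ρ; rfl }
  exact (e.tsum_eq fun ρ => M.cylProb σ x ρ.1).symm

lemma sum_prob_mul_prReach_le (M : MDP S A) {s : S} {a : A} (ha : M.legal s a) {T : Set S}
    (hs : s ∉ T) (τ : S → Strat S A) :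
    ∑ x, M.prob s a x * M.prReach (τ x) x T ≤ M.prReach (stepThenStrat s a τ) s T := by
  have hstep : ∀ x l, M.prob s a x * M.hitWeight (τ x) x T l ≤
      M.hitWeight (stepThenStrat s a τ) s T ((a, x) :: l) := by
    intro x l
    rcases eq_or_ne (M.prob s a x) 0 with h0 | h0
    · simp [h0]
    by_cases hl : M.IsPath ⟨x, l⟩ ∧ HitsFirst T ⟨x, l⟩
    · have hext : M.IsPath ⟨s, (a, x) :: l⟩ ∧ HitsFirst T ⟨s, (a, x) :: l⟩ :=
        ⟨⟨ha, pos_iff_ne_zero.2 h0, hl.1⟩, hl.2.cons hs⟩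
      rw [hitWeight, hitWeight, if_pos hl, if_pos hext, cylProb_stepThenStrat_cons]
    · rw [hitWeight, if_neg hl, mul_zero]
      exact zero_le
  calc ∑ x, M.prob s a x * M.prReach (τ x) x T
      = ∑' p : S × List (A × S), M.prob s a p.1 * M.hitWeight (τ p.1) p.1 T p.2 := by
        simp_rw [prReach_eq_tsum_hitWeight, ← ENNReal.tsum_mul_left]
        exact (ENNReal.tsum_prod.trans (tsum_fintype _)).symm
    _ ≤ _ := Summable.tsum_le_tsum_of_inj (fun p => (a, p.1) :: p.2)
        (fun p q h => by simpa [Prod.ext_iff] using h) (fun _ _ => zero_le)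
        (fun p => hstep p.1 p.2) ENNReal.summable ENNReal.summable
    _ = M.prReach (stepThenStrat s a τ) s T := (prReach_eq_tsum_hitWeight ..).symm

lemma reachVal_eq_iSup (M : MDP S A) (T : Set S) (x : S) :
    M.reachVal T x = ⨆ σ : {σ : Strat S A // M.IsStrategy σ}, M.prReach σ.1 x T := by
  rw [reachVal, iSup_subtype']

end MDP

theorem stmt0_general {S : Type u} {A : Type v} [Fintype S] [Fintype A]
    (M : MDP S A) (T : Set S) (hT : M.SinkSet T) (s : S) (a : A) (ha : M.legal s a) :
    (∑ s' : S, M.prob s a s' * M.reachVal T s') ≤ M.reachVal T s := by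
  by_cases hsT : s ∈ T
  · exact (M.sum_prob_mul_of_prob_eq_one ha ((hT s hsT).2 a ha) _).le
  calc ∑ x, M.prob s a x * M.reachVal T x
      = ⨆ τ : S → {σ : Strat S A // M.IsStrategy σ},
          ∑ x, M.prob s a x * M.prReach (τ x).1 x T := by
        simp_rw [M.reachVal_eq_iSup, ENNReal.mul_iSup]
        exact ENNReal.finsetSum_iSup_eq_iSup_pi _ _
    _ ≤ M.reachVal T s := iSup_le fun τ =>
        (M.sum_prob_mul_prReach_le ha hsT _).trans <| le_iSup₂_of_le _
          (M.stepThenStrat_isStrategy ha fun x => (τ x).2) le_rfl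

/-- For every state `s ∈ S` and every action `a` legal at `s`,
`Val(s) ≥ ∑_{s'} (P s a)(s')·Val(s')`. -/
theorem stmt0 {S : Type u} {A : Type v} [Fintype S] [Fintype A] [Nonempty S] [Nonempty A]
    (M : MDP S A) (T : Set S) (hT : M.SinkSet T) (s : S) (a : A) (ha : M.legal s a) :
    (∑ s' : S, M.prob s a s' * M.reachVal T s') ≤ M.reachVal T s :=
  stmt0_general M T hT s a ha
end

section
/- For every strategy σ ∈ Σ^Opt, every state s₀ ∈ S', and every T-hitting path ρ starting at s₀ that is a finite path of M' (all states in S', all steps in Opt), P'_{σ,s₀}(ρ) = P_{σ,s₀}(ρ)/Val(s₀). -/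
open scoped ENNReal NNReal Classical
open Filter

universe u v

variable {S : Type u} {A : Type v}

/-!
Along a path of the pruned MDP each transition probability is rescaled by `Val(s')/Val(s)`,
so the product defining `P'_{σ,s₀}(ρ)` telescopes to `P_{σ,s₀}(ρ) · Val(last ρ) / Val(s₀)`.
A `T`-hitting path ends in a sink of `T`, whose value is `1`.
-/

section Telescoping

variable {S : Type u} {A : Type v}

theorem lastState_append (s : S) (l₁ l₂ : List (A × S)) :
    lastState s (l₁ ++ l₂) = lastState (lastState s l₁) l₂ := by
  induction l₁ generalizing s with
  | nil => rfl
  | cons p rest ih => exact ih p.2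

variable [Fintype S] [Fintype A] {M : MDP S A} {v : S → ℝ≥0∞} {opt : S → A → Prop}

theorem MDP.IsPathFromPruned.pos_start {s : S} {steps : List (A × S)}
    (h : M.IsPathFromPruned v opt s steps) : 0 < v s := by
  cases steps with
  | nil => exact h
  | cons _ _ => exact h.1

/-- A state with `v s = ⊤` causes no trouble: both sides vanish there, since `x / ⊤ = 0`. -/
theorem wtP_reweight_eq {q : S → A → S → ℝ≥0∞}
    (hq : ∀ s a s', 0 < v s → opt s a → q s a s' = M.prob s a s' * v s' / v s)
    (hfin : ∀ s a s', opt s a → 0 < M.prob s a s' → v s ≠ ⊤ → v s' ≠ ⊤)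
    (σ : Strat S A) (s₀ : S) (steps pre : List (A × S))
    (hpath : M.IsPathFromPruned v opt (lastState s₀ pre) steps)
    (hlast : v (lastState s₀ (pre ++ steps)) ≠ ⊤) :
    wtP q σ s₀ pre steps =
      wtP M.prob σ s₀ pre steps * v (lastState s₀ (pre ++ steps)) / v (lastState s₀ pre) := by
  induction steps generalizing pre with
  | nil =>
    rw [List.append_nil] at hlast ⊢
    simp only [wtP, one_mul]
    exact (ENNReal.div_self hpath.ne' hlast).symm
  | cons step rest ih =>
    obtain ⟨a, s'⟩ := step
    obtain ⟨hpos, hopt, hprob, hrest⟩ := hpath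
    have hpre : lastState s₀ (pre ++ [(a, s')]) = s' := by rw [lastState_append]; rfl
    have hassoc : pre ++ (a, s') :: rest = pre ++ [(a, s')] ++ rest := by simp
    rw [hassoc] at hlast ⊢
    set s := lastState s₀ pre
    set vL := v (lastState s₀ (pre ++ [(a, s')] ++ rest))
    rw [wtP, wtP, hq s a s' hpos hopt, ih (pre ++ [(a, s')]) (by rwa [hpre]) hlast, hpre]
    by_cases hs : v s = ⊤
    · simp only [hs, ENNReal.div_top, mul_zero, zero_mul]
    · have hcancel : v s' * (v s')⁻¹ = 1 :=
        ENNReal.mul_inv_cancel hrest.pos_start.ne' (hfin s a s' hopt hprob hs)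
      calc σ s₀ pre a * (M.prob s a s' * v s' / v s) *
            (wtP M.prob σ s₀ (pre ++ [(a, s')]) rest * vL / v s')
          = σ s₀ pre a * M.prob s a s' * wtP M.prob σ s₀ (pre ++ [(a, s')]) rest * vL / v s *
              (v s' * (v s')⁻¹) := by
            simp only [div_eq_mul_inv]; ring
        _ = _ := by rw [hcancel, mul_one]

end Telescoping

namespace MDP

variable {S : Type u} {A : Type v} {T : Set S}

theorem HitsFirst.steps_eq_nil {ρ : FPath S A} (hhit : HitsFirst T ρ) (hstart : ρ.start ∈ T) :
    ρ.steps = [] := by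
  obtain ⟨start, _ | _⟩ := ρ
  · rfl
  · exact absurd hstart (hhit.2 start (by simp [FPath.states]))

variable [Fintype S] [Fintype A] {M : MDP S A}

theorem probR'_eq_of_optR {s : S} {a : A} (s' : S) (hopt : M.OptR T s a)
    (hpos : 0 < M.reachVal T s) :
    M.probR' T s a s' = M.prob s a s' * M.reachVal T s' / M.reachVal T s := by
  rw [probR', if_pos ⟨hopt, hpos⟩]

theorem reachVal_ne_top_of_optR {s s' : S} {a : A} (hopt : M.OptR T s a)
    (hprob : 0 < M.prob s a s') (hs : M.reachVal T s ≠ ⊤) : M.reachVal T s' ≠ ⊤ := by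
  have hle : M.prob s a s' * M.reachVal T s' ≤ M.reachVal T s := by
    rw [hopt.2]
    exact Finset.single_le_sum (f := fun x => M.prob s a x * M.reachVal T x)
      (fun _ _ => zero_le) (Finset.mem_univ s')
  exact fun htop => hs (top_le_iff.mp (by simpa [htop, ENNReal.mul_top hprob.ne'] using hle))

theorem prReach_eq_one_of_mem {t : S} (ht : t ∈ T) (σ : Strat S A) : M.prReach σ t T = 1 := by
  let trivialPath : {ρ : FPath S A // M.IsPath ρ ∧ HitsFirst T ρ ∧ ρ.start = t} :=
    ⟨⟨t, []⟩, trivial, ⟨ht, by simp [FPath.states]⟩, rfl⟩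
  have hunique : ∀ ρ : {ρ : FPath S A // M.IsPath ρ ∧ HitsFirst T ρ ∧ ρ.start = t},
      ρ = trivialPath := by
    rintro ⟨⟨start, steps⟩, -, hhit, rfl : start = t⟩
    cases hhit.steps_eq_nil ht
    rfl
  rw [prReach, tsum_eq_single trivialPath fun ρ hρ => absurd (hunique ρ) hρ]
  simp [trivialPath, cylProb, cylProbP, wtP]

theorem reachVal_eq_one_of_mem {t : S} (ht : t ∈ T) {σ : Strat S A} (hσ : M.IsStrategy σ) :
    M.reachVal T t = 1 := by
  refine le_antisymm (iSup₂_le fun σ' _ => (prReach_eq_one_of_mem ht σ').le) ?_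
  rw [← prReach_eq_one_of_mem ht σ]
  exact le_iSup₂ (f := fun σ' (_ : M.IsStrategy σ') => M.prReach σ' t T) σ hσ

end MDP

theorem stmt2_general {S : Type u} {A : Type v} [Fintype S] [Fintype A]
    (M : MDP S A) (T : Set S)
    (σ : Strat S A) (hσ : M.IsStrategy σ)
    (s₀ : S)
    (ρ : FPath S A) (hstart : ρ.start = s₀)
    (hρ : M.IsPathR' T ρ) (hhit : MDP.HitsFirst T ρ) :
    M.cylProbR' T σ s₀ ρ = M.cylProb σ s₀ ρ / M.reachVal T s₀ := by
  subst hstart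
  have hlast : M.reachVal T ρ.last = 1 := MDP.reachVal_eq_one_of_mem hhit.1 hσ
  have htelescope : wtP (M.probR' T) σ ρ.start [] ρ.steps =
      wtP M.prob σ ρ.start [] ρ.steps * M.reachVal T ρ.last / M.reachVal T ρ.start :=
    wtP_reweight_eq (fun _ _ s' hpos hopt => MDP.probR'_eq_of_optR s' hopt hpos)
      (fun _ _ _ => MDP.reachVal_ne_top_of_optR) σ ρ.start ρ.steps [] hρ
      (show M.reachVal T ρ.last ≠ ⊤ by simp [hlast])
  rw [MDP.cylProbR', MDP.cylProb, cylProbP, cylProbP, if_pos rfl, if_pos rfl, htelescope, hlast,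
    mul_one]

/-- for `σ ∈ Σ^Opt`, `s₀ ∈ S'`, and every `T`-hitting path `ρ` of `M'`
starting at `s₀`, `P'_{σ,s₀}(ρ) = P_{σ,s₀}(ρ)/Val(s₀)`. -/
theorem stmt2 {S : Type u} {A : Type v} [Fintype S] [Fintype A] [Nonempty S] [Nonempty A]
    (M : MDP S A) (T : Set S) (hT : M.SinkSet T)
    (σ : Strat S A) (hσ : M.IsStrategy σ) (hopt : M.SigmaOptR T σ)
    (s₀ : S) (hs₀ : 0 < M.reachVal T s₀)
    (ρ : FPath S A) (hstart : ρ.start = s₀)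
    (hρ : M.IsPathR' T ρ) (hhit : MDP.HitsFirst T ρ) :
    M.cylProbR' T σ s₀ ρ = M.cylProb σ s₀ ρ / M.reachVal T s₀ :=
  stmt2_general M T σ hσ s₀ ρ hstart hρ hhit
end
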